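/- Let n ≥ 0 and 0 < ρ < 1, and define the Mehler kernel G : ℝ^{n+1} × ℝ^{n+1} → ℝ by G(x,y) := (1−ρ²)^{−(n+1)/2} (2π)^{−(n+1)} exp((−‖x‖² − ‖y‖² + 2ρ⟨x,y⟩)/(2(1−ρ²))). Then G is positive semidefinite: for every p ≥ 1, all points z⁽¹⁾, …, z⁽ᵖ⁾ ∈ ℝ^{n+1} and all reals β₁, …, β_p, Σ_{i,j=1}^p β_i β_j G(z⁽ⁱ⁾, z⁽ʲ⁾) ≥ 0. Consequently, for every locally finite Borel measure μ on ℝ^{n+1} and every continuous, compactly supported f : ℝ^{n+1} → ℝ, ∫∫ G(x,y) f(x) f(y) dμ(x) dμ(y) ≥ 0. -/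

import Mathlib

/-!
Writing `a = ρ / (1 - ρ²)`, the exponent of the Mehler kernel is
`-‖x‖² / (2(1+ρ)) - ‖y‖² / (2(1+ρ)) - (a/2)‖x - y‖²`, and completing the square in `w` shows
that `∫ exp (-a‖x - w‖²) exp (-a‖y - w‖²) dw` is a positive multiple of `exp (-(a/2)‖x - y‖²)`.
Hence `G x y = c ∫ φ x w φ y w dw` with `c > 0` and
`φ x w = exp (-‖x‖² / (2(1+ρ))) exp (-a‖x - w‖²)`, so `∑ bᵢ bⱼ G zᵢ zⱼ = c ∫ (∑ bᵢ φ zᵢ w)² dw`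
and, by Fubini,
`∫∫ G x y f x f y dμ dμ = c ∫ (∫ f x φ x w dμ(x))² dw`.
-/

open MeasureTheory Real Set Filter
open scoped RealInnerProductSpace ENNReal

noncomputable section

/-- `ℝ^k` with the Euclidean structure. -/
abbrev Euc (k : ℕ) : Type := EuclideanSpace ℝ (Fin k)

/-- Standard Gaussian density on `ℝ^k`. -/
def gaussDensity (k : ℕ) (x : Euc k) : ℝ :=
  (2 * π) ^ (-(k : ℝ) / 2) * Real.exp (-‖x‖ ^ 2 / 2)

/-- Standard Gaussian measure on `ℝ^k`. -/
def gaussMeasure (k : ℕ) : Measure (Euc k) :=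
  volume.withDensity fun x => ENNReal.ofReal (gaussDensity k x)

/-- Ornstein–Uhlenbeck operator with correlation `ρ`. -/
def ouOp (k : ℕ) (ρ : ℝ) (f : Euc k → ℝ) (x : Euc k) : ℝ :=
  ∫ y, f (ρ • x + Real.sqrt (1 - ρ ^ 2) • y) ∂(gaussMeasure k)

/-- Noise stability of a set with correlation `ρ`. -/
def noiseStability (k : ℕ) (ρ : ℝ) (Ω : Set (Euc k)) : ℝ :=
  ∫ x, Ω.indicator (fun _ => (1 : ℝ)) x * ouOp k ρ (Ω.indicator fun _ => (1 : ℝ)) x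
    ∂(gaussMeasure k)

/-- A half space: `{x : ⟨x,u⟩ > t}` for a unit vector `u`. -/
def IsHalfSpace (k : ℕ) (H : Set (Euc k)) : Prop :=
  ∃ (u : Euc k) (t : ℝ), ‖u‖ = 1 ∧ H = {x | t < ⟪x, u⟫}

/-- The standard Gaussian cumulative distribution function. -/
def Phi (t : ℝ) : ℝ := ∫ s in Iio t, (2 * π) ^ (-(1 : ℝ) / 2) * Real.exp (-s ^ 2 / 2)

/-- The Gaussian barycenter of `Ω ⊆ ℝ^k`. -/
def bary (k : ℕ) (Ω : Set (Euc k)) : Euc k := ∫ x in Ω, x ∂(gaussMeasure k)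

section FeatureKernel

variable {X W : Type*} [MeasurableSpace W] {ν : Measure W} {φ : X → W → ℝ}

lemma sum_sum_mul_integral_mul_nonneg {ι : Type*} [Fintype ι]
    (hφ : ∀ x y, Integrable (fun w => φ x w * φ y w) ν) (z : ι → X) (b : ι → ℝ) :
    0 ≤ ∑ i, ∑ j, b i * b j * ∫ w, φ (z i) w * φ (z j) w ∂ν := by
  have hint : ∀ i j, Integrable (fun w => b i * φ (z i) w * (b j * φ (z j) w)) ν := fun i j => by
    simpa only [mul_mul_mul_comm] using (hφ (z i) (z j)).const_mul (b i * b j)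
  have hsq : ∑ i, ∑ j, b i * b j * ∫ w, φ (z i) w * φ (z j) w ∂ν =
      ∫ w, (∑ i, b i * φ (z i) w) ^ 2 ∂ν := by
    simp only [sq, Finset.sum_mul_sum]
    rw [integral_finsetSum _ fun i _ => integrable_finsetSum _ fun j _ => hint i j]
    refine Finset.sum_congr rfl fun i _ => ?_
    rw [integral_finsetSum _ fun j _ => hint i j]
    refine Finset.sum_congr rfl fun j _ => ?_
    rw [← integral_const_mul]
    congr 1 with w
    ring
  rw [hsq]
  exact integral_nonneg fun w => sq_nonneg _

variable [MeasurableSpace X] {μ : Measure X} [SFinite μ] [SFinite ν]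

lemma integral_integral_integral_mul_mul_nonneg (f : X → ℝ)
    (h : Integrable (fun p : (X × X) × W => f p.1.1 * φ p.1.1 p.2 * (f p.1.2 * φ p.1.2 p.2))
      ((μ.prod μ).prod ν)) :
    0 ≤ ∫ x, ∫ y, (∫ w, φ x w * φ y w ∂ν) * f x * f y ∂μ ∂μ := by
  have hpull : ∀ x y, (∫ w, φ x w * φ y w ∂ν) * f x * f y =
      ∫ w, f x * φ x w * (f y * φ y w) ∂ν := fun x y => by
    rw [← integral_mul_const, ← integral_mul_const]
    congr 1 with w
    ring
  simp only [hpull]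
  calc (0 : ℝ) ≤ ∫ w, (∫ x, f x * φ x w ∂μ) ^ 2 ∂ν := integral_nonneg fun w => sq_nonneg _
    _ = ∫ w, ∫ q : X × X, f q.1 * φ q.1 w * (f q.2 * φ q.2 w) ∂(μ.prod μ) ∂ν := by
      congr 1 with w
      exact (sq _).trans (integral_prod_mul _ _).symm
    _ = ∫ q : X × X, ∫ w, f q.1 * φ q.1 w * (f q.2 * φ q.2 w) ∂ν ∂(μ.prod μ) :=
      (integral_integral_swap h).symm
    _ = ∫ x, ∫ y, ∫ w, f x * φ x w * (f y * φ y w) ∂ν ∂μ ∂μ :=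
      integral_prod _ h.integral_prod_left

end FeatureKernel

lemma MeasureTheory.Integrable.mul_comp_sub_prod {G L : Type*} [MeasurableSpace G] [AddCommGroup G]
    [MeasurableAdd₂ G] [MeasurableNeg G] [NormedRing L] {μ ν : Measure G} [SFinite μ] [SFinite ν]
    [ν.IsAddLeftInvariant] {g h : G → L} (hg : Integrable g μ) (hh : Integrable h ν) :
    Integrable (fun q : G × G => g q.1 * h (q.2 - q.1)) (μ.prod ν) := by
  rw [← (measurePreserving_prod_add μ ν).integrable_comp_emb
    (MeasurableEquiv.shearAddRight G).measurableEmbedding]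
  simpa [Function.comp_def] using hg.mul_prod hh

section Gaussian

variable {V : Type*} [NormedAddCommGroup V] [InnerProductSpace ℝ V]

lemma exp_neg_mul_norm_sub_sq_mul_exp (a : ℝ) (x y w : V) :
    exp (-a * ‖x - w‖ ^ 2) * exp (-a * ‖y - w‖ ^ 2) =
      exp (-(a / 2) * ‖x - y‖ ^ 2) * exp (-(2 * a) * ‖w - (2⁻¹ : ℝ) • (x + y)‖ ^ 2) := by
  rw [← exp_add, ← exp_add]
  congr 1
  simp only [← real_inner_self_eq_norm_sq, inner_sub_left, inner_sub_right, inner_add_left,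
    inner_add_right, inner_smul_left, inner_smul_right, real_inner_comm x y, real_inner_comm x w,
    real_inner_comm y w, RCLike.conj_to_real]
  ring

variable [FiniteDimensional ℝ V] [MeasurableSpace V] [BorelSpace V]

lemma integrable_exp_neg_mul_norm_sq {a : ℝ} (ha : 0 < a) :
    Integrable fun v : V => exp (-a * ‖v‖ ^ 2) := by
  refine Integrable.of_integral_ne_zero ?_
  rw [GaussianFourier.integral_rexp_neg_mul_sq_norm ha]
  positivity

lemma integrable_exp_neg_mul_norm_sub_sq_mul_exp {a : ℝ} (ha : 0 < a) (x y : V) :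
    Integrable fun w : V => exp (-a * ‖x - w‖ ^ 2) * exp (-a * ‖y - w‖ ^ 2) := by
  simp only [exp_neg_mul_norm_sub_sq_mul_exp a x y]
  exact ((integrable_exp_neg_mul_norm_sq (by positivity)).comp_sub_right _).const_mul _

lemma integral_exp_neg_mul_norm_sub_sq_mul_exp {a : ℝ} (ha : 0 < a) (x y : V) :
    ∫ w : V, exp (-a * ‖x - w‖ ^ 2) * exp (-a * ‖y - w‖ ^ 2) =
      (π / (2 * a)) ^ (Module.finrank ℝ V / 2 : ℝ) * exp (-(a / 2) * ‖x - y‖ ^ 2) := by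
  simp only [exp_neg_mul_norm_sub_sq_mul_exp a x y]
  rw [integral_const_mul, integral_sub_right_eq_self (fun w : V => exp (-(2 * a) * ‖w‖ ^ 2)),
    GaussianFourier.integral_rexp_neg_mul_sq_norm (by positivity), mul_comm]

end Gaussian

section Mehler

variable {V : Type*} [NormedAddCommGroup V] {ρ : ℝ}

def mehlerFeature (ρ : ℝ) (x w : V) : ℝ :=
  exp (-‖x‖ ^ 2 / (2 * (1 + ρ))) * exp (-(ρ / (1 - ρ ^ 2)) * ‖x - w‖ ^ 2)

lemma mehlerFeature_mul_mehlerFeature (ρ : ℝ) (x y w : V) :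
    mehlerFeature ρ x w * mehlerFeature ρ y w =
      exp (-‖x‖ ^ 2 / (2 * (1 + ρ))) * exp (-‖y‖ ^ 2 / (2 * (1 + ρ))) *
        (exp (-(ρ / (1 - ρ ^ 2)) * ‖x - w‖ ^ 2) * exp (-(ρ / (1 - ρ ^ 2)) * ‖y - w‖ ^ 2)) :=
  mul_mul_mul_comm _ _ _ _

lemma mehlerFeature_nonneg (ρ : ℝ) (x w : V) : 0 ≤ mehlerFeature ρ x w := by
  unfold mehlerFeature
  positivity

lemma mehlerFeature_le (hρ : -1 ≤ ρ) (x w : V) :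
    mehlerFeature ρ x w ≤ exp (-(ρ / (1 - ρ ^ 2)) * ‖x - w‖ ^ 2) :=
  mul_le_of_le_one_left (exp_pos _).le <| exp_le_one_iff.2 <|
    div_nonpos_of_nonpos_of_nonneg (neg_nonpos.2 (sq_nonneg _)) (by linarith)

variable [InnerProductSpace ℝ V] [FiniteDimensional ℝ V] [MeasurableSpace V] [BorelSpace V]

lemma integrable_mehlerFeature_mul (hρ0 : 0 < ρ) (hρ1 : ρ < 1) (x y : V) :
    Integrable fun w => mehlerFeature ρ x w * mehlerFeature ρ y w := by
  have ha : 0 < ρ / (1 - ρ ^ 2) := div_pos hρ0 (by nlinarith)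
  simp only [mehlerFeature_mul_mehlerFeature]
  exact (integrable_exp_neg_mul_norm_sub_sq_mul_exp ha x y).const_mul _

lemma exp_mehler_eq_integral_mehlerFeature_mul (hρ0 : 0 < ρ) (hρ1 : ρ < 1) (x y : V) :
    exp ((-‖x‖ ^ 2 - ‖y‖ ^ 2 + 2 * ρ * ⟪x, y⟫) / (2 * (1 - ρ ^ 2))) =
      (∫ w, mehlerFeature ρ x w * mehlerFeature ρ y w) /
        (π / (2 * (ρ / (1 - ρ ^ 2)))) ^ (Module.finrank ℝ V / 2 : ℝ) := by
  have h1 : 0 < 1 - ρ ^ 2 := by nlinarith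
  have ha : 0 < ρ / (1 - ρ ^ 2) := div_pos hρ0 h1
  have hI : 0 < (π / (2 * (ρ / (1 - ρ ^ 2)))) ^ (Module.finrank ℝ V / 2 : ℝ) := by positivity
  simp only [mehlerFeature_mul_mehlerFeature]
  rw [integral_const_mul, integral_exp_neg_mul_norm_sub_sq_mul_exp ha, mul_left_comm,
    mul_div_cancel_left₀ _ hI.ne', ← exp_add, ← exp_add]
  congr 1
  rw [norm_sub_sq_real]
  field_simp
  ring

variable {μ : Measure V} [SFinite μ] {f : V → ℝ}

lemma integrable_mul_mehlerFeature_mul_mul (hρ0 : 0 < ρ) (hρ1 : ρ < 1) (hf : Integrable f μ) :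
    Integrable (fun p : (V × V) × V =>
      f p.1.1 * mehlerFeature ρ p.1.1 p.2 * (f p.1.2 * mehlerFeature ρ p.1.2 p.2))
      ((μ.prod μ).prod volume) := by
  set a := ρ / (1 - ρ ^ 2)
  have ha : 0 < a := div_pos hρ0 (by nlinarith)
  have hbound : Integrable (fun p : (V × V) × V =>
      |f p.1.1| * (|f p.1.2| * exp (-a * ‖p.2 - p.1.2‖ ^ 2))) ((μ.prod μ).prod volume) :=
    ((measurePreserving_prodAssoc μ μ volume).integrable_comp_emb
      (MeasurableEquiv.measurableEmbedding _)).mpr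
      (hf.abs.mul_prod (hf.abs.mul_comp_sub_prod (integrable_exp_neg_mul_norm_sq ha)))
  refine hbound.mono' ?_ (ae_of_all _ fun ⟨⟨x, y⟩, w⟩ => ?_)
  · have hf₁ : AEStronglyMeasurable (fun p : (V × V) × V => f p.1.1) ((μ.prod μ).prod volume) :=
      hf.1.comp_fst.comp_fst
    have hf₂ : AEStronglyMeasurable (fun p : (V × V) × V => f p.1.2) ((μ.prod μ).prod volume) :=
      hf.1.comp_snd.comp_fst
    have hφ₁ : Continuous fun p : (V × V) × V => mehlerFeature ρ p.1.1 p.2 := by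
      unfold mehlerFeature; fun_prop
    have hφ₂ : Continuous fun p : (V × V) × V => mehlerFeature ρ p.1.2 p.2 := by
      unfold mehlerFeature; fun_prop
    exact (hf₁.mul hφ₁.aestronglyMeasurable).mul (hf₂.mul hφ₂.aestronglyMeasurable)
  · have hx : mehlerFeature ρ x w ≤ 1 :=
      (mehlerFeature_le (by linarith) x w).trans (exp_le_one_iff.2 (by nlinarith [ha.le]))
    have hy : mehlerFeature ρ y w ≤ exp (-a * ‖w - y‖ ^ 2) :=
      norm_sub_rev y w ▸ mehlerFeature_le (by linarith) y w
    simp only [norm_mul, Real.norm_eq_abs, abs_of_nonneg (mehlerFeature_nonneg _ _ _)]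
    calc |f x| * mehlerFeature ρ x w * (|f y| * mehlerFeature ρ y w)
        ≤ |f x| * 1 * (|f y| * exp (-a * ‖w - y‖ ^ 2)) :=
          mul_le_mul (mul_le_mul_of_nonneg_left hx (abs_nonneg _))
            (mul_le_mul_of_nonneg_left hy (abs_nonneg _))
            (mul_nonneg (abs_nonneg _) (mehlerFeature_nonneg _ _ _)) (by positivity)
      _ = |f x| * (|f y| * exp (-a * ‖w - y‖ ^ 2)) := by rw [mul_one]

end Mehler

/-- The Mehler kernel is positive semidefinite (Lemma 5.4), both as a finite quadratic
form and when integrated against a continuous compactly supported function with respect to a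
locally finite Borel measure. -/
theorem mehler_kernel_positive_semidefinite
    (n : ℕ) (ρ : ℝ) (hρ0 : 0 < ρ) (hρ1 : ρ < 1) :
    let G : Euc (n + 1) → Euc (n + 1) → ℝ := fun x y =>
      (1 - ρ ^ 2) ^ (-((n : ℝ) + 1) / 2) * (2 * π) ^ (-((n : ℝ) + 1)) *
        Real.exp ((-‖x‖ ^ 2 - ‖y‖ ^ 2 + 2 * ρ * ⟪x, y⟫) / (2 * (1 - ρ ^ 2)))
    (∀ p : ℕ, 1 ≤ p → ∀ (z : Fin p → Euc (n + 1)) (b : Fin p → ℝ),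
      0 ≤ ∑ i, ∑ j, b i * b j * G (z i) (z j)) ∧
    (∀ μ : Measure (Euc (n + 1)), IsLocallyFiniteMeasure μ →
      ∀ f : Euc (n + 1) → ℝ, Continuous f → HasCompactSupport f →
        0 ≤ ∫ x, ∫ y, G x y * f x * f y ∂μ ∂μ) := by
  intro G
  have h1 : 0 < 1 - ρ ^ 2 := by nlinarith
  set c := (1 - ρ ^ 2) ^ (-((n : ℝ) + 1) / 2) * (2 * π) ^ (-((n : ℝ) + 1)) /
    (π / (2 * (ρ / (1 - ρ ^ 2)))) ^ (Module.finrank ℝ (Euc (n + 1)) / 2 : ℝ)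
  have hc : 0 ≤ c := by positivity
  have hG : ∀ x y, G x y = c * ∫ w, mehlerFeature ρ x w * mehlerFeature ρ y w := fun x y => by
    simp only [G, exp_mehler_eq_integral_mehlerFeature_mul hρ0 hρ1, c]
    ring
  refine ⟨fun p _ z b => ?_, fun μ _ f hf hfc => ?_⟩
  · simp only [hG, mul_left_comm _ c, ← Finset.mul_sum]
    exact mul_nonneg hc
      (sum_sum_mul_integral_mul_nonneg (integrable_mehlerFeature_mul hρ0 hρ1) z b)
  · have hG' : ∀ x y, G x y * f x * f y =
        c * ((∫ w, mehlerFeature ρ x w * mehlerFeature ρ y w) * f x * f y) := fun x y => by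
      rw [hG]; ring
    simp only [hG', integral_const_mul]
    exact mul_nonneg hc (integral_integral_integral_mul_mul_nonneg f
      (integrable_mul_mehlerFeature_mul_mul hρ0 hρ1 (hf.integrable_of_hasCompactSupport hfc)))
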